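/- arXiv:2110.01165 — 2 statements merged into one kernel-verified Lean document; each statement's English description precedes it below -/
import Mathlib

section
/- Let W ∈ ℝ^{n×n} be a mixing matrix with mixing rate α ∈ [0,1), let η ∈ ℝ, let u, v ∈ ℝ^{nd} with block averages ū, v̄, and set u' = (W ⊗ I_d)(u − η·v) with block average ū'. Then ‖u' − 1_n ⊗ ū'‖₂² ≤ (2α²/(1+α²))·‖u − 1_n ⊗ ū‖₂² + (2α²η²/(1−α²))·‖v − 1_n ⊗ v̄‖₂². -/
open Finset

noncomputable section

/-- `ℝ^d` as a Euclidean space. -/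
abbrev Vec (d : ℕ) := EuclideanSpace ℝ (Fin d)

/-- `ℝ^{nd}` as a stack of `n` blocks in `ℝ^d`, with the Euclidean (ℓ₂) norm. -/
abbrev Stacked (n d : ℕ) := PiLp 2 (fun _ : Fin n => Vec d)

/-- Block average `x̄ = (1/n) Σᵢ xᵢ` of a stacked vector. -/
def blockAvg {n d : ℕ} (x : Stacked n d) : Vec d := (n : ℝ)⁻¹ • ∑ i, x i

/-- The stacked vector `1ₙ ⊗ y` whose every block equals `y`. -/
def stack (n : ℕ) {d : ℕ} (y : Vec d) : Stacked n d := WithLp.toLp 2 (fun _ => y)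

/-- Action of `W ⊗ I_d` on a stacked vector. -/
def kronApply {n d : ℕ} (W : Matrix (Fin n) (Fin n) ℝ) (x : Stacked n d) : Stacked n d :=
  WithLp.toLp 2 (fun i => ∑ j, W i j • x j)

/-- A mixing matrix: `W·1ₙ = 1ₙ` and `Wᵀ·1ₙ = 1ₙ`. -/
def IsMixing {n : ℕ} (W : Matrix (Fin n) (Fin n) ℝ) : Prop :=
  W.mulVec (fun _ => 1) = (fun _ => 1) ∧ Matrix.vecMul (fun _ => 1) W = (fun _ => 1)

/-- The mixing rate `α = ‖W − (1/n)1ₙ1ₙᵀ‖_op` (ℓ₂ operator norm). -/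
def mixingRate {n : ℕ} (W : Matrix (Fin n) (Fin n) ℝ) : ℝ :=
  ‖LinearMap.toContinuousLinearMap
    (Matrix.toEuclideanLin (W - (n : ℝ)⁻¹ • Matrix.of fun _ _ => (1 : ℝ)))‖

/-! Since `W` is doubly stochastic, `W ⊗ I_d` preserves block averages, so the consensus error of
`u'` is `(W - 1ₙ1ₙᵀ/n) ⊗ I_d` applied to the consensus error `a - η b` of `u - η v`. That
operator acts on each of the `d` coordinate slices separately, so it contracts by the factor
`α`. The bound then follows from Young's inequality `(p + q)² ≤ (1 + t) p² + (1 + t⁻¹) q²` with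
`t = (1 - α²) / (1 + α²)`. -/

lemma add_sq_le_one_add_mul_sq_add {t : ℝ} (ht : 0 < t) (a b : ℝ) :
    (a + b) ^ 2 ≤ (1 + t) * a ^ 2 + (1 + t⁻¹) * b ^ 2 := by
  have key : 0 ≤ (t * a - b) ^ 2 / t := by positivity
  have expand : (t * a - b) ^ 2 / t = (1 + t) * a ^ 2 + (1 + t⁻¹) * b ^ 2 - (a + b) ^ 2 := by
    field_simp
    ring
  linarith

section Stacked

variable {n d : ℕ}

@[simp]
lemma stack_apply (y : Vec d) (i : Fin n) : stack n y i = y := rfl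

@[simp]
lemma kronApply_apply (M : Matrix (Fin n) (Fin n) ℝ) (x : Stacked n d) (i : Fin n) :
    kronApply M x i = ∑ j, M i j • x j := rfl

lemma blockAvg_sub_smul (x y : Stacked n d) (c : ℝ) :
    blockAvg (x - c • y) = blockAvg x - c • blockAvg y := by
  simp only [blockAvg, PiLp.sub_apply, PiLp.smul_apply, sum_sub_distrib, ← smul_sum, smul_sub,
    smul_comm c]

lemma sub_stack_blockAvg_sub_smul (x y : Stacked n d) (c : ℝ) :
    x - c • y - stack n (blockAvg (x - c • y)) =
      (x - stack n (blockAvg x)) - c • (y - stack n (blockAvg y)) := by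
  ext1 i
  simp only [PiLp.sub_apply, PiLp.smul_apply, stack_apply, blockAvg_sub_smul, smul_sub]
  abel

lemma blockAvg_kronApply {W : Matrix (Fin n) (Fin n) ℝ}
    (hW : Matrix.vecMul (fun _ => 1) W = fun _ => 1) (x : Stacked n d) :
    blockAvg (kronApply W x) = blockAvg x := by
  have hcol : ∀ j, ∑ i, W i j = 1 := fun j => by
    simpa [Matrix.vecMul, dotProduct] using congrFun hW j
  simp only [blockAvg, kronApply_apply]
  rw [sum_comm]
  simp only [← sum_smul, hcol, one_smul]

lemma kronApply_sub_stack_blockAvg {W : Matrix (Fin n) (Fin n) ℝ} (hW : IsMixing W)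
    (x : Stacked n d) :
    kronApply W x - stack n (blockAvg (kronApply W x)) =
      kronApply (W - (n : ℝ)⁻¹ • Matrix.of fun _ _ => (1 : ℝ)) (x - stack n (blockAvg x)) := by
  rw [blockAvg_kronApply hW.2]
  ext1 i
  have hn : (n : ℝ) ≠ 0 := by have := i.pos; positivity
  have hrow : ∑ j, W i j = 1 := by simpa [Matrix.mulVec, dotProduct] using congrFun hW.1 i
  simp only [PiLp.sub_apply, kronApply_apply, stack_apply, Matrix.sub_apply, Matrix.smul_apply,
    Matrix.of_apply, smul_eq_mul, mul_one, sub_smul, smul_sub, sum_sub_distrib, ← sum_smul, hrow,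
    one_smul, ← smul_sum, sum_const, card_univ, Fintype.card_fin]
  rw [show (n : ℝ)⁻¹ • ∑ j, x j = blockAvg x from rfl, nsmul_eq_mul, mul_inv_cancel₀ hn, one_smul]
  abel

def coordSlice (z : Stacked n d) (k : Fin d) : EuclideanSpace ℝ (Fin n) :=
  WithLp.toLp 2 fun j => z j k

lemma norm_sq_eq_sum_norm_sq_coordSlice (z : Stacked n d) :
    ‖z‖ ^ 2 = ∑ k, ‖coordSlice z k‖ ^ 2 := by
  simp only [PiLp.norm_sq_eq_of_L2]
  exact sum_comm

lemma coordSlice_kronApply (M : Matrix (Fin n) (Fin n) ℝ) (z : Stacked n d) (k : Fin d) :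
    coordSlice (kronApply M z) k = Matrix.toEuclideanLin M (coordSlice z k) := by
  ext j
  simp [coordSlice, Matrix.toLpLin_apply, Matrix.mulVec, dotProduct]

lemma norm_kronApply_le (M : Matrix (Fin n) (Fin n) ℝ) (z : Stacked n d) :
    ‖kronApply M z‖ ≤ ‖(Matrix.toEuclideanLin M).toContinuousLinearMap‖ * ‖z‖ := by
  set A := (Matrix.toEuclideanLin M).toContinuousLinearMap
  refine le_of_pow_le_pow_left₀ two_ne_zero (by positivity) ?_
  calc ‖kronApply M z‖ ^ 2 = ∑ k, ‖A (coordSlice z k)‖ ^ 2 := by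
        simp only [norm_sq_eq_sum_norm_sq_coordSlice, coordSlice_kronApply]
        rfl
    _ ≤ ∑ k, (‖A‖ * ‖coordSlice z k‖) ^ 2 := by gcongr with k; exact A.le_opNorm _
    _ = (‖A‖ * ‖z‖) ^ 2 := by simp only [mul_pow, ← mul_sum, norm_sq_eq_sum_norm_sq_coordSlice z]

end Stacked

/-- For a mixing matrix `W` with mixing rate `α ∈ [0,1)` and
`u' = (W ⊗ I_d)(u − ηv)`,
`‖u' − 1ₙ⊗ū'‖² ≤ (2α²/(1+α²))‖u − 1ₙ⊗ū‖² + (2α²η²/(1−α²))‖v − 1ₙ⊗v̄‖²`. -/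
theorem consensus_error_step {n d : ℕ} (W : Matrix (Fin n) (Fin n) ℝ) (α : ℝ)
    (hW : IsMixing W) (hα : α = mixingRate W) (hα1 : α ∈ Set.Ico (0 : ℝ) 1)
    (η : ℝ) (u v : Stacked n d) (u' : Stacked n d) (hu' : u' = kronApply W (u - η • v)) :
    ‖u' - stack n (blockAvg u')‖ ^ 2 ≤
      (2 * α ^ 2 / (1 + α ^ 2)) * ‖u - stack n (blockAvg u)‖ ^ 2
      + (2 * α ^ 2 * η ^ 2 / (1 - α ^ 2)) * ‖v - stack n (blockAvg v)‖ ^ 2 := by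
  set a := u - stack n (blockAvg u)
  set b := v - stack n (blockAvg v)
  have hα2 : α ^ 2 < 1 := pow_lt_one₀ hα1.1 hα1.2 two_ne_zero
  set t := (1 - α ^ 2) / (1 + α ^ 2)
  have ht : 0 < t := div_pos (sub_pos.2 hα2) (by positivity)
  have hcoef₁ : α ^ 2 * (1 + t) = 2 * α ^ 2 / (1 + α ^ 2) := by
    simp only [t]; field_simp; ring
  have hcoef₂ : α ^ 2 * (1 + t⁻¹) = 2 * α ^ 2 / (1 - α ^ 2) := by
    have := (sub_pos.2 hα2).ne'
    simp only [t]; field_simp; ring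
  have hcontract : ‖u' - stack n (blockAvg u')‖ ≤ α * ‖a - η • b‖ := by
    rw [hu', kronApply_sub_stack_blockAvg hW, sub_stack_blockAvg_sub_smul, hα]
    exact norm_kronApply_le _ _
  calc ‖u' - stack n (blockAvg u')‖ ^ 2 ≤ (α * (‖a‖ + ‖η • b‖)) ^ 2 := by
        gcongr
        exact hcontract.trans (by gcongr; exacts [hα1.1, norm_sub_le _ _])
    _ ≤ α ^ 2 * ((1 + t) * ‖a‖ ^ 2 + (1 + t⁻¹) * ‖η • b‖ ^ 2) := by
        rw [mul_pow]
        gcongr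
        exact add_sq_le_one_add_mul_sq_add ht _ _
    _ = _ := by
        rw [norm_smul, Real.norm_eq_abs, mul_pow, sq_abs, mul_div_right_comm _ (η ^ 2), ← hcoef₁,
          ← hcoef₂]
        ring
end
end

section
/- Let L > 0 and let f_1, …, f_n : ℝ^d → ℝ be differentiable with L-Lipschitz gradients. Let x, x' ∈ ℝ^{nd} with blocks x_i, x'_i and block averages x̄, x̄', and let ∇F(x) ∈ ℝ^{nd} denote the stacked vector whose i-th block is ∇f_i(x_i). Then ‖∇F(x) − ∇F(x')‖₂² ≤ 2L²·‖x − 1_n ⊗ x̄‖₂² + 2L²·‖x' − 1_n ⊗ x̄'‖₂² + n·L²·‖x̄ − x̄'‖₂². -/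
open Finset

noncomputable section

/-- The distributed gradient `∇F(x)`, whose `i`-th block is `∇fᵢ(xᵢ)`. -/
def gradStack {n d : ℕ} (f : Fin n → Vec d → ℝ) (x : Stacked n d) : Stacked n d :=
  WithLp.toLp 2 (fun i => gradient (f i) (x i))

/-!
Blockwise, `∇F` is `L`-Lipschitz, so `‖∇F(x) − ∇F(x')‖ ≤ L‖x − x'‖`. With `u = x − 1ₙ⊗x̄` and
`u' = x' − 1ₙ⊗x̄'` we have `x − x' = (u − u') + 1ₙ⊗(x̄ − x̄')`; the blocks of `u − u'` sum to zero,
so the two summands are orthogonal and `‖x − x'‖² = ‖u − u'‖² + n‖x̄ − x̄'‖²`. The parallelogram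
law bounds `‖u − u'‖²` by `2‖u‖² + 2‖u'‖²`.
-/

theorem PiLp.norm_map_sub_map_sq_le {ι : Type*} [Fintype ι] {E F : ι → Type*}
    [∀ i, SeminormedAddCommGroup (E i)] [∀ i, SeminormedAddCommGroup (F i)]
    (g : ∀ i, E i → F i) (L : ℝ) (hg : ∀ i a b, ‖g i a - g i b‖ ≤ L * ‖a - b‖)
    (x y : PiLp 2 E) :
    ‖WithLp.toLp 2 (fun i => g i (x i)) - WithLp.toLp 2 (fun i => g i (y i))‖ ^ 2
      ≤ L ^ 2 * ‖x - y‖ ^ 2 := by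
  simp only [PiLp.norm_sq_eq_of_L2, Finset.mul_sum]
  gcongr with i
  calc ‖g i (x i) - g i (y i)‖ ^ 2 ≤ (L * ‖x i - y i‖) ^ 2 :=
        pow_le_pow_left₀ (norm_nonneg _) (hg i _ _) 2
    _ = L ^ 2 * ‖x i - y i‖ ^ 2 := mul_pow _ _ _

theorem norm_sub_sq_le_two_mul_add {E : Type*} [NormedAddCommGroup E] [InnerProductSpace ℝ E]
    (a b : E) : ‖a - b‖ ^ 2 ≤ 2 * ‖a‖ ^ 2 + 2 * ‖b‖ ^ 2 := by
  have := parallelogram_law_with_norm ℝ a b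
  nlinarith [sq_nonneg ‖a + b‖]

section Stack

variable {n d : ℕ}

theorem stack_sub (y z : Vec d) : stack n (y - z) = stack n y - stack n z := rfl

theorem norm_stack_sq (y : Vec d) : ‖stack n y‖ ^ 2 = n * ‖y‖ ^ 2 := by
  simp [PiLp.norm_sq_eq_of_L2, stack]

theorem inner_stack (v : Stacked n d) (y : Vec d) :
    inner ℝ v (stack n y) = inner ℝ (∑ i, v i) y := by
  simp [PiLp.inner_apply, stack, sum_inner]

theorem sum_sub_stack_blockAvg (x : Stacked n d) : ∑ i, (x - stack n (blockAvg x)) i = 0 := by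
  rcases Nat.eq_zero_or_pos n with rfl | hn
  · simp
  · simp [stack, blockAvg, Finset.sum_sub_distrib, ← Nat.cast_smul_eq_nsmul ℝ, smul_smul,
      mul_inv_cancel₀ (Nat.cast_ne_zero (R := ℝ) |>.mpr hn.ne')]

theorem norm_add_stack_sq {v : Stacked n d} (hv : ∑ i, v i = 0) (y : Vec d) :
    ‖v + stack n y‖ ^ 2 = ‖v‖ ^ 2 + n * ‖y‖ ^ 2 := by
  rw [← norm_stack_sq, norm_add_sq_real, inner_stack, hv, inner_zero_left, mul_zero, add_zero]

theorem norm_sub_sq_split_blockAvg (x x' : Stacked n d) :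
    ‖x - x'‖ ^ 2 = ‖(x - stack n (blockAvg x)) - (x' - stack n (blockAvg x'))‖ ^ 2
      + n * ‖blockAvg x - blockAvg x'‖ ^ 2 := by
  have hsum : ∑ i, ((x - stack n (blockAvg x)) - (x' - stack n (blockAvg x'))) i = 0 := by
    have := Finset.sum_sub_distrib (s := univ) (fun i => (x - stack n (blockAvg x)) i)
      (fun i => (x' - stack n (blockAvg x')) i)
    rwa [sum_sub_stack_blockAvg, sum_sub_stack_blockAvg, sub_zero] at this
  rw [← norm_add_stack_sq hsum, stack_sub]
  congr 3
  abel

end Stack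

theorem gradStack_difference_bound_general {n d : ℕ} (L : ℝ)
    (f : Fin n → Vec d → ℝ)
    (hlip : ∀ i, ∀ x y : Vec d, ‖gradient (f i) x - gradient (f i) y‖ ≤ L * ‖x - y‖)
    (x x' : Stacked n d) :
    ‖gradStack f x - gradStack f x'‖ ^ 2 ≤
      2 * L ^ 2 * ‖x - stack n (blockAvg x)‖ ^ 2
      + 2 * L ^ 2 * ‖x' - stack n (blockAvg x')‖ ^ 2
      + n * L ^ 2 * ‖blockAvg x - blockAvg x'‖ ^ 2 := by
  calc ‖gradStack f x - gradStack f x'‖ ^ 2 ≤ L ^ 2 * ‖x - x'‖ ^ 2 :=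
        PiLp.norm_map_sub_map_sq_le (fun i => gradient (f i)) L hlip x x'
    _ = L ^ 2 * (‖(x - stack n (blockAvg x)) - (x' - stack n (blockAvg x'))‖ ^ 2
          + n * ‖blockAvg x - blockAvg x'‖ ^ 2) := by
        rw [norm_sub_sq_split_blockAvg]
    _ ≤ L ^ 2 * ((2 * ‖x - stack n (blockAvg x)‖ ^ 2 + 2 * ‖x' - stack n (blockAvg x')‖ ^ 2)
          + n * ‖blockAvg x - blockAvg x'‖ ^ 2) := by
        gcongr
        exact norm_sub_sq_le_two_mul_add _ _
    _ = _ := by ring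

/-- For `f₁,…,fₙ` with `L`-Lipschitz gradients,
`‖∇F(x) − ∇F(x')‖² ≤ 2L²‖x − 1ₙ⊗x̄‖² + 2L²‖x' − 1ₙ⊗x̄'‖² + nL²‖x̄ − x̄'‖²`. -/
theorem gradStack_difference_bound {n d : ℕ} (L : ℝ) (hL : 0 < L)
    (f : Fin n → Vec d → ℝ) (hdiff : ∀ i, Differentiable ℝ (f i))
    (hlip : ∀ i, ∀ x y : Vec d, ‖gradient (f i) x - gradient (f i) y‖ ≤ L * ‖x - y‖)
    (x x' : Stacked n d) :
    ‖gradStack f x - gradStack f x'‖ ^ 2 ≤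
      2 * L ^ 2 * ‖x - stack n (blockAvg x)‖ ^ 2
      + 2 * L ^ 2 * ‖x' - stack n (blockAvg x')‖ ^ 2
      + n * L ^ 2 * ‖blockAvg x - blockAvg x'‖ ^ 2 :=
  gradStack_difference_bound_general L f hlip x x'
end
end
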